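/- A ⋈^f J is a local ring if and only if A is local and J ⊆ Rad(B) (the Jacobson radical of B). -/

import Mathlib

variable {A B : Type*} [CommRing A] [CommRing B]

/-- The amalgamation `A ⋈^f J` of `A` and `B` along the ideal `J` with respect to `f`,
as a subring of `A × B`. -/
def amalg (f : A →+* B) (J : Ideal B) : Subring (A × B) where
  carrier := {p | ∃ a, ∃ j ∈ J, p = (a, f a + j)}
  zero_mem' := ⟨0, 0, J.zero_mem, by simp [Prod.ext_iff]⟩
  one_mem' := ⟨1, 0, J.zero_mem, by simp [Prod.ext_iff]⟩
  add_mem' := by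
    rintro _ _ ⟨a, j, hj, rfl⟩ ⟨a', j', hj', rfl⟩
    exact ⟨a + a', j + j', J.add_mem hj hj', by simp [Prod.ext_iff]; ring⟩
  neg_mem' := by
    rintro _ ⟨a, j, hj, rfl⟩
    exact ⟨-a, -j, J.neg_mem hj, by simp [Prod.ext_iff]; ring⟩
  mul_mem' := by
    rintro _ _ ⟨a, j, hj, rfl⟩ ⟨a', j', hj', rfl⟩
    exact ⟨a * a', f a * j' + j * f a' + j * j',
      J.add_mem (J.add_mem (J.mul_mem_left _ hj') (J.mul_mem_right _ hj)) (J.mul_mem_right _ hj),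
      by simp [Prod.ext_iff]; ring⟩

/-- The set of zero-divisors of a ring. -/
def zdSet (R : Type*) [CommRing R] : Set R := {a | ∃ b, b ≠ 0 ∧ a * b = 0}

/-- The content ideal of a polynomial: the ideal generated by its coefficients. -/
def contentIdeal {R : Type*} [CommRing R] (p : Polynomial R) : Ideal R :=
  Ideal.span (Set.range p.coeff)

/-- A polynomial is Gaussian if `c(ph) = c(p) c(h)` for every polynomial `h`. -/
def IsGaussianPoly {R : Type*} [CommRing R] (p : Polynomial R) : Prop :=
  ∀ h : Polynomial R, contentIdeal (p * h) = contentIdeal p * contentIdeal h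

/-- A Gaussian ring. -/
def IsGaussianRing (R : Type*) [CommRing R] : Prop :=
  ∀ p q : Polynomial R, contentIdeal (p * q) = contentIdeal p * contentIdeal q

/-- A Prüfer ring: every finitely generated regular ideal is invertible
(in the total ring of quotients). -/
def IsPruferRing (R : Type*) [CommRing R] : Prop :=
  ∀ I : Ideal R, I.FG → (∃ r ∈ I, r ∈ nonZeroDivisors R) →
    ∃ T : FractionalIdeal (nonZeroDivisors R) (FractionRing R),
      (I : FractionalIdeal (nonZeroDivisors R) (FractionRing R)) * T = 1

/-! `A ⋈^f J` is the fibre product of `A → B/J ← B`, hence an equalizer in `A × B`, so an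
element is a unit as soon as both coordinates are. Therefore the surjection `A ⋈^f J → A` is a
local homomorphism exactly when `J ⊆ Rad(B)`, i.e. when `B → B/J` is local. Locality then passes
both ways: a ring with a local homomorphism to a local ring is local, and a surjection out of a
local ring has local target and is itself local. -/

namespace amalg

variable (f : A →+* B) (J : Ideal B)

theorem mem_iff {p : A × B} :
    p ∈ amalg f J ↔ Ideal.Quotient.mk J p.2 = Ideal.Quotient.mk J (f p.1) := by
  rw [Ideal.Quotient.eq]
  constructor
  · rintro ⟨a, j, hj, rfl⟩
    simpa using hj
  · exact fun h => ⟨p.1, p.2 - f p.1, h, by simp⟩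

theorem eq_eqLocus : amalg f J =
    ((Ideal.Quotient.mk J).comp (RingHom.snd A B)).eqLocus
      (((Ideal.Quotient.mk J).comp f).comp (RingHom.fst A B)) :=
  SetLike.ext fun _ => mem_iff f J

instance : IsLocalHom (amalg f J).subtype := by
  rw [eq_eqLocus]
  infer_instance

theorem isUnit_iff {x : amalg f J} : IsUnit x ↔ IsUnit (x : A × B).1 ∧ IsUnit (x : A × B).2 :=
  (isUnit_map_iff (amalg f J).subtype x).symm.trans Prod.isUnit_iff

def fst : amalg f J →+* A := (RingHom.fst A B).comp (amalg f J).subtype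

theorem fst_surjective : Function.Surjective (fst f J) :=
  fun a => ⟨⟨(a, f a), (mem_iff f J).2 rfl⟩, rfl⟩

theorem nontrivial_of_nontrivial [Nontrivial (amalg f J)] : Nontrivial A :=
  ⟨0, 1, fun h => zero_ne_one (α := amalg f J)
    (Subtype.ext (Prod.ext h (by simpa using congrArg f h)))⟩

theorem isLocalHom_fst_iff : IsLocalHom (fst f J) ↔ J ≤ (⊥ : Ideal B).jacobson := by
  constructor
  · intro _ j hj
    refine Ideal.mem_jacobson_bot.2 fun y => ?_
    have hmem : ((1, j * y + 1) : A × B) ∈ amalg f J :=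
      ⟨1, j * y, J.mul_mem_right y hj, by simp [add_comm]⟩
    have hunit : IsUnit (⟨_, hmem⟩ : amalg f J) := isUnit_of_map_unit (fst f J) _ isUnit_one
    exact ((isUnit_iff f J).1 hunit).2
  · intro hJ
    have := isLocalHom_of_le_jacobson_bot J hJ
    refine ⟨fun x hx => (isUnit_iff f J).2 ⟨hx, ?_⟩⟩
    have hx' := (mem_iff f J).1 x.2
    exact isUnit_of_map_unit (Ideal.Quotient.mk J) _ (hx' ▸ (hx.map f).map _)

end amalg

theorem amalg_isLocalRing_iff (f : A →+* B) (J : Ideal B) :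
    IsLocalRing ↥(amalg f J) ↔ IsLocalRing A ∧ J ≤ (⊥ : Ideal B).jacobson := by
  rw [← amalg.isLocalHom_fst_iff f J]
  have hsurj := amalg.fst_surjective f J
  constructor
  · intro _
    have := amalg.nontrivial_of_nontrivial f J
    exact ⟨.of_surjective' _ hsurj, .of_surjective _ hsurj⟩
  · rintro ⟨_, _⟩
    exact (amalg.fst f J).domain_isLocalRing
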